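/- arXiv:1801.09361 — 4 statements merged into one kernel-verified Lean document; each statement's English description precedes it below -/
import Mathlib

section
/- Let a > 0 and v > 0, and let x : ℝ → ℝ be a differentiable function with x(0) = 0 and deriv x(0) = 0, such that deriv x is Lipschitz continuous with constant a and deriv x(t) ≤ v for all t ≥ 0. Then for every t ≥ v/a one has x(t) ≤ v·t − v²/(2a). -/
/-- If a vehicle starts from rest, its speed `deriv x` is Lipschitz with
constant `a > 0` (maximum acceleration) and bounded above by `v > 0`
(maximum allowed speed) for all `t ≥ 0`, then for every `t ≥ v / a` its
position satisfies `x t ≤ v * t - v^2 / (2 * a)`. -/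
theorem position_le_linear_bound
    (a v : ℝ) (ha : 0 < a) (hv : 0 < v) (x : ℝ → ℝ)
    (hdiff : Differentiable ℝ x)
    (hx0 : x 0 = 0) (hv0 : deriv x 0 = 0)
    (hlip : LipschitzWith ⟨a, ha.le⟩ (deriv x))
    (hspeed : ∀ t : ℝ, 0 ≤ t → deriv x t ≤ v) :
    ∀ t : ℝ, v / a ≤ t → x t ≤ v * t - v ^ 2 / (2 * a) := by
  intro t ht
  set c : ℝ := v / a with hc
  have hc0 : 0 ≤ c := le_of_lt (div_pos hv ha)
  have hcont : Continuous (deriv x) := hlip.continuous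
  -- bound deriv x s ≤ a * s for s ≥ 0
  have hbound : ∀ s : ℝ, deriv x s - 0 ≤ a * |s - 0| := by
    intro s
    have := hlip.dist_le_mul s 0
    simp only [Real.dist_eq] at this
    calc deriv x s - 0 ≤ |deriv x s - deriv x 0| := by
          rw [hv0]; exact le_abs_self _
      _ ≤ a * |s - 0| := this
  have hFTC : ∀ u : ℝ, x u - x 0 = ∫ s in (0:ℝ)..u, deriv x s := by
    intro u
    exact (intervalIntegral.integral_deriv_eq_sub (fun s _ => hdiff s)
      (hcont.intervalIntegrable _ _)).symm
  have hxt : x t = (∫ s in (0:ℝ)..c, deriv x s) + ∫ s in c..t, deriv x s := by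
    have := hFTC t
    rw [hx0, sub_zero] at this
    rw [this, intervalIntegral.integral_add_adjacent_intervals
      (hcont.intervalIntegrable _ _) (hcont.intervalIntegrable _ _)]
  have hI1 : (∫ s in (0:ℝ)..c, deriv x s) ≤ ∫ s in (0:ℝ)..c, a * s := by
    apply intervalIntegral.integral_mono_on hc0 (hcont.intervalIntegrable _ _)
      ((continuous_const.mul continuous_id).intervalIntegrable _ _)
    intro s hs
    have := hbound s
    rw [sub_zero, sub_zero, abs_of_nonneg hs.1] at this
    exact this
  have hI2 : (∫ s in c..t, deriv x s) ≤ ∫ s in c..t, (v : ℝ) := by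
    apply intervalIntegral.integral_mono_on ht (hcont.intervalIntegrable _ _)
      (intervalIntegrable_const)
    intro s hs
    exact hspeed s (hc0.trans hs.1)
  have e1 : (∫ s in (0:ℝ)..c, a * s) = a * c ^ 2 / 2 := by
    rw [intervalIntegral.integral_const_mul, integral_id]
    ring
  have e2 : (∫ s in c..t, (v : ℝ)) = v * (t - c) := by
    simp [mul_comm]
  have hval : a * c ^ 2 / 2 + v * (t - c) = v * t - v ^ 2 / (2 * a) := by
    rw [hc]; field_simp; ring
  calc x t = (∫ s in (0:ℝ)..c, deriv x s) + ∫ s in c..t, deriv x s := hxt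
    _ ≤ a * c ^ 2 / 2 + v * (t - c) := by
        rw [← e1, ← e2]; exact add_le_add hI1 hI2
    _ = v * t - v ^ 2 / (2 * a) := hval
end

section
/- Let a > 0, v > 0, and let L be a real number with L ≥ v²/(2a). Let x : ℝ → ℝ be a differentiable function with x(0) = 0 and deriv x(0) = 0, such that deriv x is Lipschitz continuous with constant a and deriv x(t) ≤ v for all t ≥ 0. Then every T ≥ 0 with x(T) ≥ L satisfies T ≥ L/v + v/(2a) = (2aL + v²)/(2av). In particular, a vehicle starting from rest with acceleration rate at most a and speed at most v cannot completely cross an intersection route of length L in time less than (2aL + v²)/(2av). -/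
/-!
Since the speed starts at `0` and changes at rate at most `a`, it stays below `a t`, so the
distance covered by time `t` is at most `a t² / 2`. In particular the vehicle cannot cover
`L ≥ v² / (2a)` before time `v / a`, and up to that time it covers at most `v² / (2a)`; afterwards
it gains at most `v` per unit time, so `L ≤ x T ≤ v² / (2a) + v (T - v / a) = v T - v² / (2a)`.
-/

open Set NNReal

lemma LipschitzWith.sub_le_mul_sub {K : ℝ≥0} {g : ℝ → ℝ} (hg : LipschitzWith K g) {s t : ℝ}
    (hst : s ≤ t) : g t - g s ≤ K * (t - s) :=
  (le_abs_self _).trans <| by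
    simpa [Real.dist_eq, abs_of_nonneg (sub_nonneg.2 hst)] using hg.dist_le_mul t s

lemma sub_le_sub_of_deriv_le_deriv {f g : ℝ → ℝ} (hf : Differentiable ℝ f)
    (hg : Differentiable ℝ g) {s t : ℝ} (hst : s ≤ t)
    (hfg : ∀ u ∈ Ioo s t, deriv f u ≤ deriv g u) : f t - f s ≤ g t - g s := by
  have hmono : MonotoneOn (g - f) (Icc s t) := by
    refine monotoneOn_of_deriv_nonneg (convex_Icc s t) (hg.sub hf).continuous.continuousOn
      (hg.sub hf).differentiableOn fun u hu => ?_
    rw [interior_Icc] at hu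
    rw [deriv_sub (hg u) (hf u)]
    exact sub_nonneg.2 (hfg u hu)
  have := hmono (left_mem_Icc.2 hst) (right_mem_Icc.2 hst) hst
  simp only [Pi.sub_apply] at this
  linarith

lemma sub_le_half_mul_sq_of_lipschitzWith_deriv {K : ℝ≥0} {x : ℝ → ℝ}
    (hdiff : Differentiable ℝ x) (hlip : LipschitzWith K (deriv x)) {s t : ℝ}
    (hrest : deriv x s = 0) (hst : s ≤ t) : x t - x s ≤ K * (t - s) ^ 2 / 2 := by
  have hparabola (u : ℝ) : HasDerivAt (fun u => K * (u - s) ^ 2 / 2) (K * (u - s)) u :=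
    ((((hasDerivAt_id' u).sub_const s).fun_pow 2).const_mul (K : ℝ)).div_const 2 |>.congr_deriv
      (by norm_num; ring)
  have := sub_le_sub_of_deriv_le_deriv hdiff (fun u => (hparabola u).differentiableAt) hst
    fun u hu => by
      rw [(hparabola u).deriv]
      simpa [hrest] using hlip.sub_le_mul_sub hu.1.le
  simpa using this

/-- A vehicle starting from rest whose speed `deriv x` is Lipschitz with
constant `a > 0` (maximum acceleration) and bounded above by `v > 0`
(maximum allowed speed) cannot cover a distance `L ≥ v^2 / (2 * a)` in time
less than `L / v + v / (2 * a) = (2 * a * L + v^2) / (2 * a * v)`. -/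
theorem crossing_time_lower_bound_long_route
    (a v L : ℝ) (ha : 0 < a) (hv : 0 < v) (hL : v ^ 2 / (2 * a) ≤ L)
    (x : ℝ → ℝ)
    (hdiff : Differentiable ℝ x)
    (hx0 : x 0 = 0) (hv0 : deriv x 0 = 0)
    (hlip : LipschitzWith ⟨a, ha.le⟩ (deriv x))
    (hspeed : ∀ t : ℝ, 0 ≤ t → deriv x t ≤ v) :
    ∀ T : ℝ, 0 ≤ T → L ≤ x T →
      L / v + v / (2 * a) ≤ T ∧ L / v + v / (2 * a) = (2 * a * L + v ^ 2) / (2 * a * v) := by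
  intro T hT hxT
  have hramp (t : ℝ) (ht : 0 ≤ t) : x t ≤ a * t ^ 2 / 2 := by
    have := sub_le_half_mul_sq_of_lipschitzWith_deriv hdiff hlip hv0 ht
    rwa [hx0, sub_zero, sub_zero] at this
  have hramp_end : a * (v / a) ^ 2 / 2 = v ^ 2 / (2 * a) := by field_simp
  refine ⟨?_, by field_simp⟩
  rcases le_or_gt (v / a) T with hlate | hearly
  · have hcruise : x T - x (v / a) ≤ v * (T - v / a) :=
      (convex_Ici 0).image_sub_le_mul_sub_of_deriv_le hdiff.continuous.continuousOn
        hdiff.differentiableOn (fun t ht => hspeed t (interior_subset ht)) _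
        (div_pos hv ha).le _ hT hlate
    have hcross : L + v ^ 2 / (2 * a) ≤ v * T := by
      have := hramp (v / a) (div_pos hv ha).le
      have hvva : v * (v / a) = 2 * (v ^ 2 / (2 * a)) := by field_simp
      linarith
    calc L / v + v / (2 * a) = (L + v ^ 2 / (2 * a)) / v := by field_simp
      _ ≤ T := (div_le_iff₀' hv).2 hcross
  · have : a * T ^ 2 / 2 < a * (v / a) ^ 2 / 2 := by gcongr
    linarith [hramp T hT]
end

section
/- Let a > 0, v > 0, and let L be a real number with 0 < L ≤ v²/(2a). Then √(2L/a) is the least element of the set of crossing times {T : ℝ | T ≥ 0 and there exists a differentiable x : ℝ → ℝ with x(0) = 0, deriv x(0) = 0, deriv x Lipschitz continuous with constant a, deriv x(t) ≤ v for all t ≥ 0, and x(T) = L}. That is, T_m = √(2L/a) is the shortest time in which a vehicle starting from rest can cross an intersection route of length L. -/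
/-!
With `deriv x 0 = 0` and `deriv x` `a`-Lipschitz, the speed is at most `a t`, so
`a t² / 2 - x t` is nondecreasing on `t ≥ 0`; hence `x T ≤ a T² / 2`, and `x T = L` forces
`T ≥ √(2L/a)`.
Conversely, accelerating at rate `a` up to `T = √(2L/a)` and cruising afterwards
covers `L` at time `T`, and its top speed `a T = √(2aL)` is at most `v` since `L ≤ v²/(2a)`.
-/

open Real intervalIntegral

theorem le_mul_sq_div_two_of_lipschitzWith_deriv {x : ℝ → ℝ} {K : NNReal}
    (hx : Differentiable ℝ x) (hx0 : x 0 = 0) (hdx0 : deriv x 0 = 0)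
    (hK : LipschitzWith K (deriv x)) {t : ℝ} (ht : 0 ≤ t) : x t ≤ K * t ^ 2 / 2 := by
  set g : ℝ → ℝ := fun s => K * s ^ 2 / 2 - x s
  have hg : ∀ s, HasDerivAt g (K * s - deriv x s) s := fun s => by
    refine (((hasDerivAt_pow 2 s).const_mul (K : ℝ)).div_const 2 |>.sub
      (hx s).hasDerivAt).congr_deriv ?_
    push_cast
    ring
  have hspeed : ∀ s, 0 ≤ s → deriv x s ≤ K * s := fun s hs => by
    simpa [abs_of_nonneg hs] using (le_abs_self _).trans (hK.norm_le_mul hdx0 s)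
  have hmono : MonotoneOn g (Set.Ici 0) := by
    refine monotoneOn_of_deriv_nonneg (convex_Ici 0) (HasDerivAt.continuousOn fun s _ => hg s)
      (fun s _ => (hg s).differentiableAt.differentiableWithinAt) fun s hs => ?_
    rw [interior_Ici] at hs
    rw [(hg s).deriv, sub_nonneg]
    exact hspeed s hs.le
  have hg0t : g 0 ≤ g t := hmono Set.self_mem_Ici ht ht
  simp only [g, hx0] at hg0t
  linarith

noncomputable def accelerateThenCruise (a T t : ℝ) : ℝ :=
  ∫ u in (0)..t, a * min u T

namespace accelerateThenCruise

variable {a T : ℝ}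

lemma hasDerivAt (t : ℝ) : HasDerivAt (accelerateThenCruise a T) (a * min t T) t :=
  ((by fun_prop : Continuous fun u : ℝ => a * min u T).integral_hasStrictDerivAt 0 t).hasDerivAt

lemma differentiable : Differentiable ℝ (accelerateThenCruise a T) := fun t =>
  (hasDerivAt t).differentiableAt

lemma deriv_eq (t : ℝ) : deriv (accelerateThenCruise a T) t = a * min t T :=
  (hasDerivAt t).deriv

lemma deriv_le (ha : 0 ≤ a) (t : ℝ) : deriv (accelerateThenCruise a T) t ≤ a * T := by
  rw [deriv_eq]
  exact mul_le_mul_of_nonneg_left (min_le_right t T) ha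

lemma apply_zero : accelerateThenCruise a T 0 = 0 := integral_same

lemma apply_self (hT : 0 ≤ T) : accelerateThenCruise a T T = a * T ^ 2 / 2 := by
  have hspeed : Set.EqOn (fun u => a * min u T) (fun u => a * u) (Set.uIcc 0 T) := by
    intro u hu
    rw [Set.uIcc_of_le hT] at hu
    simp [min_eq_left hu.2]
  rw [accelerateThenCruise, integral_congr hspeed, integral_const_mul, integral_id]
  ring

lemma lipschitzWith_deriv (ha : 0 ≤ a) :
    LipschitzWith ⟨a, ha⟩ (deriv (accelerateThenCruise a T)) := by
  have h := (lipschitzWith_smul a).comp (LipschitzWith.id.min_const T)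
  rw [Real.nnnorm_of_nonneg ha, mul_one] at h
  rw [funext deriv_eq]
  exact h

end accelerateThenCruise

/-- Case 1 of the shortest-crossing-time calculation: if the route length `L`
satisfies `0 < L ≤ v² / (2a)` (too short to reach the maximum allowed speed
`v`), then `√(2 L / a)` is the least time `T ≥ 0` in which some admissible
trajectory (starting from rest, speed Lipschitz with constant `a` and bounded
by `v` for `t ≥ 0`) covers distance `L`. -/
theorem shortest_crossing_time_short_route
    (a v L : ℝ) (ha : 0 < a) (hv : 0 < v) (hL0 : 0 < L) (hL : L ≤ v ^ 2 / (2 * a)) :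
    IsLeast
      {T : ℝ | 0 ≤ T ∧ ∃ x : ℝ → ℝ,
        Differentiable ℝ x ∧ x 0 = 0 ∧ deriv x 0 = 0 ∧
        LipschitzWith ⟨a, ha.le⟩ (deriv x) ∧
        (∀ t : ℝ, 0 ≤ t → deriv x t ≤ v) ∧
        x T = L}
      (Real.sqrt (2 * L / a)) := by
  set T := √(2 * L / a)
  have hT0 : 0 ≤ T := sqrt_nonneg _
  have hT2 : T ^ 2 = 2 * L / a := sq_sqrt (by positivity)
  have hTv : a * T ≤ v := by
    rw [le_div_iff₀ (by positivity)] at hL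
    refine (pow_le_pow_iff_left₀ (by positivity) hv.le two_ne_zero).1 ?_
    rw [mul_pow, hT2]
    field_simp
    linarith
  refine ⟨⟨hT0, accelerateThenCruise a T, accelerateThenCruise.differentiable,
    accelerateThenCruise.apply_zero, by simp [accelerateThenCruise.deriv_eq, hT0],
    accelerateThenCruise.lipschitzWith_deriv ha.le,
    fun t _ => (accelerateThenCruise.deriv_le ha.le t).trans hTv, ?_⟩, ?_⟩
  · rw [accelerateThenCruise.apply_self hT0, hT2]
    field_simp
  · rintro S ⟨hS0, x, hx, hx0, hdx0, hK, -, hxS⟩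
    have hLS : x S ≤ a * S ^ 2 / 2 := le_mul_sq_div_two_of_lipschitzWith_deriv hx hx0 hdx0 hK hS0
    rw [hxS] at hLS
    refine (sqrt_le_left hS0).2 ?_
    rw [div_le_iff₀ ha]
    linarith
end

section
/- Let a > 0, v > 0, and let L be a real number with L ≥ v²/(2a). Then L/v + v/(2a) (equivalently (2aL + v²)/(2av)) is the least element of the set of crossing times {T : ℝ | T ≥ 0 and there exists a differentiable x : ℝ → ℝ with x(0) = 0, deriv x(0) = 0, deriv x Lipschitz continuous with constant a, deriv x(t) ≤ v for all t ≥ 0, and x(T) = L}. That is, T_m = (2aL + v²)/(2av) is the shortest time in which a vehicle starting from rest can cross an intersection route of length L. -/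
/-!
By the Lipschitz condition and `x' 0 = 0`, an admissible speed satisfies `x' t ≤ min (a t) v`, the
speed of the trajectory that accelerates at the full rate `a` until it reaches the limit `v` at time
`v / a` and then cruises. Integrating, `x T` is at most the position of this ramp trajectory at
time `T`; that position increases strictly and equals `L` exactly at `L / v + v / (2a)`, while the
ramp trajectory is itself admissible.
-/

open Set

lemma LipschitzWith.le_add_mul_sub {f : ℝ → ℝ} {K : NNReal} (hf : LipschitzWith K f) {s t : ℝ}
    (hst : s ≤ t) : f t ≤ f s + K * (t - s) := by
  have h := hf.dist_le_mul t s
  rw [Real.dist_eq, Real.dist_eq, abs_of_nonneg (sub_nonneg.2 hst)] at h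
  linarith [le_abs_self (f t - f s)]

lemma sub_le_sub_of_deriv_le_of_hasDerivAt {f g g' : ℝ → ℝ} {s T : ℝ} (hf : Differentiable ℝ f)
    (hg : ∀ t, HasDerivAt g (g' t) t) (hle : ∀ t ∈ Ioo s T, deriv f t ≤ g' t) (hsT : s ≤ T) :
    f T - f s ≤ g T - g s := by
  have hgf : Differentiable ℝ (g - f) := fun t => (hg t).differentiableAt.sub (hf t)
  have hmono : MonotoneOn (g - f) (Icc s T) := by
    refine monotoneOn_of_deriv_nonneg (convex_Icc s T) hgf.continuous.continuousOn
      hgf.differentiableOn fun t ht => ?_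
    rw [interior_Icc] at ht
    rw [deriv_sub (hg t).differentiableAt (hf t), (hg t).deriv]
    exact sub_nonneg.2 (hle t ht)
  have := hmono (left_mem_Icc.2 hsT) (right_mem_Icc.2 hsT) hsT
  simp only [Pi.sub_apply] at this
  linarith

noncomputable section

def rampSpeed (a v t : ℝ) : ℝ := min (a * t) v

def rampPosition (a v T : ℝ) : ℝ := ∫ t in 0..T, rampSpeed a v t

end

section Ramp

variable {a v : ℝ}

lemma continuous_rampSpeed : Continuous (rampSpeed a v) := by
  unfold rampSpeed; fun_prop

lemma lipschitzWith_rampSpeed (ha : 0 ≤ a) : LipschitzWith ⟨a, ha⟩ (rampSpeed a v) := by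
  refine LipschitzWith.min_const (LipschitzWith.of_dist_le_mul fun s t => ?_) v
  rw [Real.dist_eq, Real.dist_eq, ← mul_sub, abs_mul, abs_of_nonneg ha]
  rfl

lemma hasDerivAt_rampPosition (t : ℝ) : HasDerivAt (rampPosition a v) (rampSpeed a v t) t :=
  (continuous_rampSpeed.integral_hasStrictDerivAt 0 t).hasDerivAt

lemma deriv_rampPosition : deriv (rampPosition a v) = rampSpeed a v :=
  funext fun t => (hasDerivAt_rampPosition t).deriv

lemma rampPosition_zero : rampPosition a v 0 = 0 :=
  intervalIntegral.integral_same

lemma strictMonoOn_rampPosition (ha : 0 < a) (hv : 0 < v) :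
    StrictMonoOn (rampPosition a v) (Ici 0) := by
  refine strictMonoOn_of_deriv_pos (convex_Ici 0)
    (fun t _ => (hasDerivAt_rampPosition t).continuousAt.continuousWithinAt) fun t ht => ?_
  rw [interior_Ici] at ht
  rw [deriv_rampPosition]
  exact lt_min (mul_pos ha ht) hv

lemma rampPosition_of_div_le (ha : 0 < a) (hv : 0 ≤ v) {T : ℝ} (hT : v / a ≤ T) :
    rampPosition a v T = v * T - v ^ 2 / (2 * a) := by
  have hc : 0 ≤ v / a := div_nonneg hv ha.le
  have hint : ∀ s t : ℝ, IntervalIntegrable (rampSpeed a v) MeasureTheory.volume s t :=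
    fun _ _ => continuous_rampSpeed.intervalIntegrable _ _
  have haccel : ∫ t in 0..v / a, rampSpeed a v t = ∫ t in 0..v / a, a * t := by
    refine intervalIntegral.integral_congr fun t ht => min_eq_left ?_
    rw [uIcc_of_le hc] at ht
    exact (le_div_iff₀' ha).1 ht.2
  have hcruise : ∫ t in v / a..T, rampSpeed a v t = ∫ _ in v / a..T, v := by
    refine intervalIntegral.integral_congr fun t ht => min_eq_right ?_
    rw [uIcc_of_le hT] at ht
    exact (div_le_iff₀' ha).1 ht.1
  rw [rampPosition, ← intervalIntegral.integral_add_adjacent_intervals (hint 0 (v / a)) (hint _ T),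
    haccel, hcruise, intervalIntegral.integral_const_mul, integral_id,
    intervalIntegral.integral_const, smul_eq_mul]
  field_simp
  ring

lemma le_rampPosition {x : ℝ → ℝ} (ha : 0 ≤ a) (hx : Differentiable ℝ x) (hx0 : x 0 = 0)
    (hdx0 : deriv x 0 = 0) (hlip : LipschitzWith ⟨a, ha⟩ (deriv x))
    (hspeed : ∀ t, 0 ≤ t → deriv x t ≤ v) {T : ℝ} (hT : 0 ≤ T) : x T ≤ rampPosition a v T := by
  have hle : ∀ t ∈ Ioo 0 T, deriv x t ≤ rampSpeed a v t := fun t ht => by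
    refine le_min ?_ (hspeed t ht.1.le)
    have := hlip.le_add_mul_sub ht.1.le
    rwa [hdx0, zero_add, sub_zero] at this
  simpa [hx0, rampPosition_zero] using
    sub_le_sub_of_deriv_le_of_hasDerivAt hx hasDerivAt_rampPosition hle hT

end Ramp

/-- Case 2 of the shortest-crossing-time calculation: if the route length `L`
satisfies `L ≥ v² / (2a)` (long enough to reach the maximum allowed speed
`v`), then `L / v + v / (2a) = (2aL + v²) / (2av)` is the least time `T ≥ 0`
in which some admissible trajectory (starting from rest, speed Lipschitz with
constant `a` and bounded by `v` for `t ≥ 0`) covers distance `L`. -/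
theorem shortest_crossing_time_long_route
    (a v L : ℝ) (ha : 0 < a) (hv : 0 < v) (hL : v ^ 2 / (2 * a) ≤ L) :
    IsLeast
      {T : ℝ | 0 ≤ T ∧ ∃ x : ℝ → ℝ,
        Differentiable ℝ x ∧ x 0 = 0 ∧ deriv x 0 = 0 ∧
        LipschitzWith ⟨a, ha.le⟩ (deriv x) ∧
        (∀ t : ℝ, 0 ≤ t → deriv x t ≤ v) ∧
        x T = L}
      (L / v + v / (2 * a)) ∧
    L / v + v / (2 * a) = (2 * a * L + v ^ 2) / (2 * a * v) := by
  have hcruise : v / a ≤ L / v + v / (2 * a) := by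
    have : v / (2 * a) ≤ L / v := by
      rw [div_le_div_iff₀ (by positivity) hv]
      rw [div_le_iff₀ (by positivity)] at hL
      linarith
    linarith [show v / a = v / (2 * a) + v / (2 * a) by field_simp; ring]
  have hTm : 0 ≤ L / v + v / (2 * a) := (div_nonneg hv.le ha.le).trans hcruise
  have hreach : rampPosition a v (L / v + v / (2 * a)) = L := by
    rw [rampPosition_of_div_le ha hv.le hcruise]
    field_simp
    ring
  refine ⟨⟨⟨hTm, rampPosition a v, fun t => (hasDerivAt_rampPosition t).differentiableAt,
    rampPosition_zero, ?_, ?_, ?_, hreach⟩, ?_⟩, by field_simp⟩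
  · simp [deriv_rampPosition, rampSpeed, hv.le]
  · rw [deriv_rampPosition]
    exact lipschitzWith_rampSpeed ha.le
  · intro t _
    rw [deriv_rampPosition]
    exact min_le_right _ _
  · rintro T ⟨hT, x, hx, hx0, hdx0, hlip, hspeed, rfl⟩
    rw [← (strictMonoOn_rampPosition ha hv).le_iff_le hTm hT, hreach]
    exact le_rampPosition ha.le hx hx0 hdx0 hlip hspeed hT
end
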